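/- Let d, n, k ≥ 1 and let A = Σ × (ℤ/2ℤ)^Q, a finite alphabet of cardinality n·2^k. Then there is an injective group homomorphism from RFA_fix(ℤ^d,n,k) into Aut(A^{ℤ^d}), the group of self-homeomorphisms of the full shift A^{ℤ^d} commuting with all shift maps. -/

import Mathlib

/-!
An element `e` of RFA_fix moves the head without rewriting the tape, so it is described by a
displacement `D_e(x, q) ∈ ℤ^d` and a new state, both depending continuously on `(x, q)`. A point
of `(Σ × (ℤ/2ℤ)^Q)^{ℤ^d}` is a tape `x` together with one bit for each machine configuration
"head at `u` in state `q` on `x`"; `e` acts by carrying these bits along `e`. This commutes with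
the shifts, is continuous, and is a group action as soon as `e ↦ D_e` satisfies the cocycle
identity `D_{e₁e₂} = D_{e₁} ∘ e₂ + D_{e₂}`.

With at most one tape letter, `D_e = 0` will do. With at least two letters, tapes that differ
from each of their nonzero shifts in infinitely many cells are dense; on such a tape the
displacement is determined by the new tape, so continuous displacements are unique and the cocycle
identity holds. The same density argument shows that a machine which never changes the tape never
writes. Finally a single bit detects the displacement and the new state of `e⁻¹`, which gives
injectivity.
-/

/-- The shift action on configurations: `(shiftC v x) u = x (u - v)`. -/
def shiftC {d : ℕ} {A : Type*} (v : Fin d → ℤ) (x : (Fin d → ℤ) → A) : (Fin d → ℤ) → A :=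
  fun u => x (u - v)

/-- The moving-tape space `Σ^{ℤ^d} × Q`. -/
abbrev Tape (d n k : ℕ) : Type := ((Fin d → ℤ) → Fin n) × Fin k

/-- `T` is a moving-tape `(ℤ^d,n,k)`-Turing machine. -/
def IsTapeTM (d n k : ℕ) (T : Tape d n k → Tape d n k) : Prop :=
  ∃ (Fi Fo : Finset (Fin d → ℤ))
    (f : Tape d n k → ((Fin d → ℤ) → Fin n) × Fin k × (Fin d → ℤ)),
    (∀ (x y : (Fin d → ℤ) → Fin n) (q : Fin k),
        (∀ u ∈ Fi, x u = y u) → f (x, q) = f (y, q)) ∧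
    ∀ (x : (Fin d → ℤ) → Fin n) (q : Fin k),
      T (x, q) =
        (shiftC (-(f (x, q)).2.2) (fun u => if u ∈ Fo then (f (x, q)).1 u else x u),
         (f (x, q)).2.1)

/-- `RFA_fix(ℤ^d,n,k)`: permutations of the moving-tape space such that the
permutation and its inverse are moving-tape Turing machines and which never change
the tape (the new tape is always a shift of the old one). -/
def RFAfixSet (d n k : ℕ) : Set (Equiv.Perm (Tape d n k)) :=
  {e | IsTapeTM d n k ⇑e ∧ IsTapeTM d n k ⇑e.symm ∧
    ∀ (x : (Fin d → ℤ) → Fin n) (q : Fin k),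
      ∃ w : Fin d → ℤ, (e (x, q)).1 = shiftC w x}

/-- The alphabet `A = Σ × (ℤ/2ℤ)^Q`, of cardinality `n · 2^k`. -/
abbrev PermAlphabet (n k : ℕ) : Type := Fin n × (Fin k → ZMod 2)

open Function Set

theorem shiftC_shiftC {d : ℕ} {A : Type*} (v w : Fin d → ℤ) (x : (Fin d → ℤ) → A) :
    shiftC v (shiftC w x) = shiftC (v + w) x := by
  funext u
  simp [shiftC, sub_sub]

theorem shiftC_zero {d : ℕ} {A : Type*} (x : (Fin d → ℤ) → A) : shiftC 0 x = x := by
  funext u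
  simp [shiftC]

theorem shiftC_eq_shiftC_iff {d : ℕ} {A : Type*} {v w : Fin d → ℤ} {x y : (Fin d → ℤ) → A} :
    shiftC v x = shiftC w y ↔ x = shiftC (w - v) y := by
  constructor <;> intro h
  · rw [← shiftC_zero x, ← neg_add_cancel v, ← shiftC_shiftC, h, shiftC_shiftC, neg_add_eq_sub]
  · rw [h, shiftC_shiftC, add_sub_cancel]

section Topology

variable {X ι A Q β : Type*} [TopologicalSpace X] [TopologicalSpace A] [TopologicalSpace Q]
  [TopologicalSpace β]

theorem Continuous.apply_of_discreteTopology [TopologicalSpace ι] [DiscreteTopology ι]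
    {f : X → ι → A} {g : X → ι} (hf : Continuous f) (hg : Continuous g) :
    Continuous fun x => f x (g x) :=
  have hev : Continuous fun p : (ι → A) × ι => p.1 p.2 :=
    continuous_prod_of_discrete_right.2 fun i => continuous_apply i
  hev.comp (hf.prodMk hg)

theorem continuous_of_dependsOn_finset [DiscreteTopology A] [DiscreteTopology Q]
    {g : (ι → A) × Q → β} (F : Finset ι)
    (hg : ∀ x y q, (∀ u ∈ F, x u = y u) → g (x, q) = g (y, q)) : Continuous g := by
  refine continuous_prod_of_discrete_right.2 fun q => IsLocallyConstant.continuous ?_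
  refine (IsLocallyConstant.iff_exists_open _).2 fun x =>
    ⟨(F : Set ι).pi fun u => {x u}, isOpen_set_pi F.finite_toSet fun _ _ => isOpen_discrete _,
      by simp, fun y hy => hg y x q (by simpa using hy)⟩

end Topology

section Aperiodic

variable {d : ℕ} {A : Type*}

def CofinitelyAperiodic (y : (Fin d → ℤ) → A) : Prop :=
  ∀ t ≠ 0, {u | shiftC t y u ≠ y u}.Infinite

theorem CofinitelyAperiodic.eq_zero_of_finite {y : (Fin d → ℤ) → A} (hy : CofinitelyAperiodic y)
    {t : Fin d → ℤ} (h : {u | shiftC t y u ≠ y u}.Finite) : t = 0 :=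
  by_contra fun ht => hy t ht h

theorem CofinitelyAperiodic.shiftC_injective {y : (Fin d → ℤ) → A}
    (hy : CofinitelyAperiodic y) : Injective fun t => shiftC t y := by
  intro t₁ t₂ h
  have h' : shiftC (t₁ - t₂) y = y := (shiftC_eq_shiftC_iff.1 h.symm).symm
  exact sub_eq_zero.1 (hy.eq_zero_of_finite (by simp [h']))

theorem CofinitelyAperiodic.of_finite_ne {y y' : (Fin d → ℤ) → A} (hy : CofinitelyAperiodic y)
    (h : {u | y' u ≠ y u}.Finite) : CofinitelyAperiodic y' := by
  intro t ht hfin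
  have hshift : ((fun u => u - t) ⁻¹' {u | y' u ≠ y u}).Finite :=
    h.preimage sub_left_injective.injOn
  refine hy t ht (((hfin.union h).union hshift).subset fun u hu => ?_)
  by_contra hnot
  simp only [mem_union, mem_ofPred_eq, mem_preimage, not_or, not_not, shiftC] at hu hnot
  exact hu (by rw [← hnot.2, ← hnot.1.2, hnot.1.1])

theorem sq_sub_ne_sq {m j : ℕ} {c : ℤ} (hc : c ≠ 0) (hm : |c| < m) :
    (m : ℤ) ^ 2 - c ≠ (j : ℤ) ^ 2 := by
  intro h
  obtain ⟨hlo, hhi⟩ := abs_lt.1 hm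
  rcases lt_trichotomy (j : ℤ) m with hjm | hjm | hjm
  · nlinarith
  · exact hc (by rw [hjm] at h; linarith)
  · nlinarith

/-- The marker configuration is `a` exactly on the diagonal points `(m², …, m²)`; the gaps between
consecutive squares grow, so no nonzero shift preserves the marker far out. -/
theorem exists_cofinitelyAperiodic [Nontrivial A] :
    ∃ y : (Fin d → ℤ) → A, CofinitelyAperiodic y := by
  classical
  obtain ⟨a, b, hab⟩ := exists_pair_ne A
  let diag : ℕ → Fin d → ℤ := fun m _ => (m : ℤ) ^ 2
  refine ⟨fun u => if u ∈ range diag then a else b, fun t ht => ?_⟩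
  obtain ⟨i, hi⟩ := ne_iff.1 ht
  let N := (t i).natAbs + 1
  refine infinite_of_injective_forall_mem (f := fun j => diag (N + j)) ?_ fun j => ?_
  · intro j₁ j₂ h
    have hsq : ((N + j₁ : ℕ) : ℤ) ^ 2 = ((N + j₂ : ℕ) : ℤ) ^ 2 := congrFun h i
    replace hsq : (N + j₁) ^ 2 = (N + j₂) ^ 2 := by exact_mod_cast hsq
    have := Nat.pow_left_injective two_ne_zero hsq
    omega
  · have hN : |t i| < ((N + j : ℕ) : ℤ) := by
      push_cast
      rw [Int.abs_eq_natAbs]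
      omega
    have hnot : diag (N + j) - t ∉ range diag := by
      rintro ⟨m, hm⟩
      exact sq_sub_ne_sq hi hN (congrFun hm i).symm
    simp only [shiftC, mem_ofPred_eq, if_neg hnot, if_pos (mem_range_self _)]
    exact hab.symm

theorem dense_setOf_cofinitelyAperiodic [TopologicalSpace A] [Nontrivial A] :
    Dense {y : (Fin d → ℤ) → A | CofinitelyAperiodic y} := by
  classical
  obtain ⟨y₀, hy₀⟩ := exists_cofinitelyAperiodic (d := d) (A := A)
  refine dense_iff_inter_open.2 fun U hU ⟨y, hyU⟩ => ?_
  obtain ⟨I, V, hV, hIU⟩ := isOpen_pi_iff.1 hU y hyU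
  refine ⟨fun u => if u ∈ I then y u else y₀ u, hIU fun u hu => ?_,
    hy₀.of_finite_ne (I.finite_toSet.subset fun u hu => ?_)⟩
  · simpa only [if_pos (Finset.mem_coe.1 hu)] using (hV u hu).2
  · by_contra hI
    exact hu (if_neg hI)

end Aperiodic

section Displacement

variable {d n k : ℕ}

/-- Continuity of `D` and of the new state is what remains of the finite window of a local rule. -/
structure IsDisplacement (T : Tape d n k → Tape d n k) (D : Tape d n k → Fin d → ℤ) : Prop where
  continuous_disp : Continuous D
  continuous_state : Continuous fun p => (T p).2
  fst_eq : ∀ p, (T p).1 = shiftC (D p) p.1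

theorem isDisplacement_id : IsDisplacement (id : Tape d n k → Tape d n k) 0 :=
  ⟨continuous_const, continuous_snd, fun p => (shiftC_zero p.1).symm⟩

theorem isDisplacement_zero_of_subsingleton [Subsingleton ((Fin d → ℤ) → Fin n)]
    (T : Tape d n k → Tape d n k) : IsDisplacement T 0 :=
  ⟨continuous_const, continuous_of_discreteTopology, fun _ => Subsingleton.elim _ _⟩

theorem IsDisplacement.continuous {T : Tape d n k → Tape d n k} {D : Tape d n k → Fin d → ℤ}
    (h : IsDisplacement T D) : Continuous T := by
  have hT : T = fun p => (fun u => p.1 (u - D p), (T p).2) :=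
    funext fun p => Prod.ext (h.fst_eq p) rfl
  rw [hT]
  exact (continuous_pi fun u => continuous_fst.apply_of_discreteTopology
    (continuous_const.sub h.continuous_disp)).prodMk h.continuous_state

theorem IsDisplacement.comp {a b : Tape d n k → Tape d n k} {Da Db : Tape d n k → Fin d → ℤ}
    (hb : IsDisplacement b Db) (ha : IsDisplacement a Da) :
    IsDisplacement (b ∘ a) fun p => Db (a p) + Da p where
  continuous_disp := (hb.continuous_disp.comp ha.continuous).add ha.continuous_disp
  continuous_state := hb.continuous_state.comp ha.continuous
  fst_eq p := by rw [comp_apply, hb.fst_eq, ha.fst_eq, shiftC_shiftC]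

theorem IsDisplacement.unique (hn : 2 ≤ n) {T : Tape d n k → Tape d n k}
    {D₁ D₂ : Tape d n k → Fin d → ℤ} (h₁ : IsDisplacement T D₁) (h₂ : IsDisplacement T D₂) :
    D₁ = D₂ :=
  have : Nontrivial (Fin n) := Fin.nontrivial_iff_two_le.2 hn
  h₁.continuous_disp.ext_on (dense_setOf_cofinitelyAperiodic.prod dense_univ)
    h₂.continuous_disp fun p hp => hp.1.shiftC_injective ((h₁.fst_eq p).symm.trans (h₂.fst_eq p))

/-- On a cofinitely aperiodic tape the rewritten window must agree with the old tape, and by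
continuity it then does so on every tape. -/
theorem IsTapeTM.exists_isDisplacement (hn : 2 ≤ n) {T : Tape d n k → Tape d n k}
    (hT : IsTapeTM d n k T) (hfix : ∀ x q, ∃ w, (T (x, q)).1 = shiftC w x) :
    ∃ D, IsDisplacement T D := by
  classical
  have : Nontrivial (Fin n) := Fin.nontrivial_iff_two_le.2 hn
  obtain ⟨Fi, Fo, f, hloc, hrule⟩ := hT
  have hf : Continuous f := continuous_of_dependsOn_finset Fi hloc
  let write : Tape d n k → (Fin d → ℤ) → Fin n := fun p u => if u ∈ Fo then (f p).1 u else p.1 u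
  have hwrite : ∀ q, (fun x => write (x, q)) = id := by
    intro q
    refine Continuous.ext_on dense_setOf_cofinitelyAperiodic ?_ continuous_id fun x hx => ?_
    · refine continuous_pi fun u => ?_
      by_cases hu : u ∈ Fo
      · simp only [write, if_pos hu]
        exact (continuous_apply u).comp (hf.comp (.prodMk_left q)).fst
      · simpa only [write, if_neg hu] using continuous_apply u
    · obtain ⟨w, hw⟩ := hfix x q
      rw [hrule] at hw
      dsimp only at hw
      replace hw := shiftC_eq_shiftC_iff.1 hw
      have hzero : w - -(f (x, q)).2.2 = 0 := hx.eq_zero_of_finite <|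
        Fo.finite_toSet.subset fun u hu => by_contra fun hFo => hu (by rw [← hw]; exact if_neg hFo)
      change (fun u => if u ∈ Fo then (f (x, q)).1 u else x u) = x
      rw [hw, hzero, shiftC_zero]
  refine ⟨fun p => -(f p).2.2, hf.snd.snd.neg, ?_, fun ⟨x, q⟩ => ?_⟩
  · have hstate : (fun p => (T p).2) = fun p => (f p).2.1 := funext fun ⟨x, q⟩ => by rw [hrule]
    exact hstate ▸ hf.snd.fst
  · rw [hrule]
    exact congrArg (shiftC _) (congrFun (hwrite q) x)

end Displacement

section Pullback

variable {d n k : ℕ}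

/-- The bit `(z u).2 q` belongs to the machine configuration with head at `u` in state `q`; the
pullback along `T` gives it the bit of the configuration that `T` sends it to. -/
def pullback (T : Tape d n k → Tape d n k) (D : Tape d n k → Fin d → ℤ)
    (z : (Fin d → ℤ) → PermAlphabet n k) : (Fin d → ℤ) → PermAlphabet n k :=
  fun u => ((z u).1, fun q =>
    let p : Tape d n k := (shiftC (-u) fun v => (z v).1, q)
    (z (u - D p)).2 (T p).2)

theorem pullback_shiftC (T : Tape d n k → Tape d n k) (D : Tape d n k → Fin d → ℤ)
    (v : Fin d → ℤ) (z : (Fin d → ℤ) → PermAlphabet n k) :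
    pullback T D (shiftC v z) = shiftC v (pullback T D z) := by
  funext u
  have htape : shiftC (-u) (fun w => (shiftC v z w).1) = shiftC (-(u - v)) fun w => (z w).1 := by
    change shiftC (-u) (shiftC v fun w => (z w).1) = _
    rw [shiftC_shiftC, neg_sub, sub_eq_neg_add]
  change _ = pullback T D z (u - v)
  simp only [pullback, htape]
  simp only [shiftC, sub_right_comm]

theorem pullback_id_zero (z : (Fin d → ℤ) → PermAlphabet n k) : pullback id 0 z = z := by
  funext u
  simp [pullback]

theorem pullback_pullback {a b : Tape d n k → Tape d n k} {Da Db : Tape d n k → Fin d → ℤ}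
    (ha : ∀ p, (a p).1 = shiftC (Da p) p.1) (z : (Fin d → ℤ) → PermAlphabet n k) :
    pullback a Da (pullback b Db z) = pullback (b ∘ a) (fun p => Db (a p) + Da p) z := by
  funext u
  refine Prod.ext rfl (funext fun q => ?_)
  let p : Tape d n k := (shiftC (-u) fun v => (z v).1, q)
  have hap : a p = (shiftC (-(u - Da p)) fun v => (z v).1, (a p).2) := by
    refine Prod.ext ?_ rfl
    rw [ha, shiftC_shiftC, neg_sub, sub_eq_add_neg]
  change (pullback b Db z (u - Da p)).2 (a p).2 = (z (u - (Db (a p) + Da p))).2 (b (a p)).2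
  rw [hap, sub_add_eq_sub_sub_swap]
  rfl

theorem IsDisplacement.continuous_pullback {T : Tape d n k → Tape d n k}
    {D : Tape d n k → Fin d → ℤ} (h : IsDisplacement T D) : Continuous (pullback T D) := by
  refine continuous_pi fun u => (continuous_apply u).fst.prodMk (continuous_pi fun q => ?_)
  have hp : Continuous fun z : (Fin d → ℤ) → PermAlphabet n k =>
      ((shiftC (-u) fun v => (z v).1, q) : Tape d n k) :=
    (continuous_pi fun w => (continuous_apply _).fst).prodMk continuous_const
  exact (continuous_id.apply_of_discreteTopology
    (continuous_const.sub (h.continuous_disp.comp hp))).snd.apply_of_discreteTopology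
      (h.continuous_state.comp hp)

/-- Test against a single bit, placed where `T₁` sends the head. -/
theorem eq_of_pullback_eq {T₁ T₂ : Tape d n k → Tape d n k} {D₁ D₂ : Tape d n k → Fin d → ℤ}
    (h₁ : ∀ p, (T₁ p).1 = shiftC (D₁ p) p.1) (h₂ : ∀ p, (T₂ p).1 = shiftC (D₂ p) p.1)
    (h : pullback T₁ D₁ = pullback T₂ D₂) : T₁ = T₂ := by
  classical
  funext p
  let z : (Fin d → ℤ) → PermAlphabet n k :=
    fun v => (p.1 v, fun s => if (v, s) = (-D₁ p, (T₁ p).2) then 1 else 0)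
  have hz : (shiftC (-0) fun v => (z v).1, p.2) = p := by rw [neg_zero, shiftC_zero]
  have hbit : (pullback T₁ D₁ z 0).2 p.2 = (pullback T₂ D₂ z 0).2 p.2 := by rw [h]
  simp only [pullback, hz, zero_sub, z] at hbit
  have hD : (-D₂ p, (T₂ p).2) = (-D₁ p, (T₁ p).2) := by
    by_contra hne
    simp [hne] at hbit
  simp only [Prod.mk.injEq, neg_inj] at hD
  exact Prod.ext (by rw [h₁, h₂, hD.1]) hD.2.symm

end Pullback

section Cocycle

open Equiv

variable {d n k : ℕ}

structure DisplacementCocycle (G : Subgroup (Perm (Tape d n k))) where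
  disp : Perm (Tape d n k) → Tape d n k → Fin d → ℤ
  isDisplacement : ∀ e ∈ G, IsDisplacement e (disp e)
  disp_mul : ∀ e₁ ∈ G, ∀ e₂ ∈ G, ∀ p, disp (e₁ * e₂) p = disp e₁ (e₂ p) + disp e₂ p

namespace DisplacementCocycle

variable {G : Subgroup (Perm (Tape d n k))} (c : DisplacementCocycle G)

def act (e : Perm (Tape d n k)) :
    ((Fin d → ℤ) → PermAlphabet n k) → (Fin d → ℤ) → PermAlphabet n k :=
  pullback ⇑e⁻¹ (c.disp e⁻¹)

theorem disp_one : c.disp 1 = 0 :=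
  funext fun p => by simpa using c.disp_mul 1 G.one_mem 1 G.one_mem p

theorem act_one : c.act 1 = id := by
  funext z
  rw [act, inv_one, disp_one]
  exact pullback_id_zero z

theorem act_mul {e₁ e₂ : Perm (Tape d n k)} (he₁ : e₁ ∈ G) (he₂ : e₂ ∈ G) :
    c.act (e₁ * e₂) = c.act e₁ ∘ c.act e₂ := by
  funext z
  have hdisp : c.disp (e₁ * e₂)⁻¹ = fun p => c.disp e₂⁻¹ (e₁⁻¹ p) + c.disp e₁⁻¹ p :=
    funext <| mul_inv_rev e₁ e₂ ▸ c.disp_mul _ (G.inv_mem he₂) _ (G.inv_mem he₁)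
  rw [comp_apply, act, act, act, pullback_pullback ((c.isDisplacement _ (G.inv_mem he₁)).fst_eq),
    hdisp, mul_inv_rev, Perm.coe_mul]

theorem act_shiftC (e : Perm (Tape d n k)) (v : Fin d → ℤ) (z : (Fin d → ℤ) → PermAlphabet n k) :
    c.act e (shiftC v z) = shiftC v (c.act e z) :=
  pullback_shiftC _ _ v z

theorem continuous_act {e : Perm (Tape d n k)} (he : e ∈ G) : Continuous (c.act e) :=
  (c.isDisplacement _ (G.inv_mem he)).continuous_pullback

def toHomeomorphHom :
    G →* ((Fin d → ℤ) → PermAlphabet n k) ≃ₜ ((Fin d → ℤ) → PermAlphabet n k) where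
  toFun e :=
    { toFun := c.act e
      invFun := c.act e⁻¹
      left_inv z := by simpa [c.act_one] using (congrFun (c.act_mul (G.inv_mem e.2) e.2) z).symm
      right_inv z := by simpa [c.act_one] using (congrFun (c.act_mul e.2 (G.inv_mem e.2)) z).symm
      continuous_toFun := c.continuous_act e.2
      continuous_invFun := c.continuous_act (G.inv_mem e.2) }
  map_one' := Homeomorph.ext fun z => congrFun c.act_one z
  map_mul' e₁ e₂ := Homeomorph.ext fun z => congrFun (c.act_mul e₁.2 e₂.2) z

theorem toHomeomorphHom_injective : Function.Injective c.toHomeomorphHom := by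
  intro e₁ e₂ h
  have hact : c.act e₁ = c.act e₂ := funext fun z => DFunLike.congr_fun h z
  refine Subtype.ext (inv_injective (DFunLike.coe_injective ?_))
  exact eq_of_pullback_eq (c.isDisplacement _ (G.inv_mem e₁.2)).fst_eq
    (c.isDisplacement _ (G.inv_mem e₂.2)).fst_eq hact

def ofSubsingleton [Subsingleton ((Fin d → ℤ) → Fin n)] :
    DisplacementCocycle (⊤ : Subgroup (Perm (Tape d n k))) where
  disp _ := 0
  isDisplacement e _ := isDisplacement_zero_of_subsingleton e
  disp_mul _ _ _ _ _ := (add_zero 0).symm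

end DisplacementCocycle

def displacementSubgroup (d n k : ℕ) : Subgroup (Perm (Tape d n k)) where
  carrier := {e | (∃ D, IsDisplacement e D) ∧ ∃ D, IsDisplacement ⇑e⁻¹ D}
  mul_mem' := fun ⟨⟨_, h₁⟩, ⟨_, h₁'⟩⟩ ⟨⟨_, h₂⟩, ⟨_, h₂'⟩⟩ =>
    ⟨⟨_, h₁.comp h₂⟩, ⟨_, by rw [mul_inv_rev]; exact h₂'.comp h₁'⟩⟩
  one_mem' := ⟨⟨0, isDisplacement_id⟩, ⟨0, by rw [inv_one]; exact isDisplacement_id⟩⟩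
  inv_mem' := fun ⟨h, h'⟩ => ⟨h', by rwa [inv_inv]⟩

open Classical in
noncomputable def displacementSubgroup.cocycle (hn : 2 ≤ n) :
    DisplacementCocycle (displacementSubgroup d n k) where
  disp e := if h : ∃ D, IsDisplacement e D then h.choose else 0
  isDisplacement e he := by
    rw [dif_pos he.1]
    exact he.1.choose_spec
  disp_mul e₁ he₁ e₂ he₂ p := by
    rw [dif_pos he₁.1, dif_pos he₂.1, dif_pos (mul_mem he₁ he₂).1]
    exact congrFun ((mul_mem he₁ he₂).1.choose_spec.unique hn
      (he₁.1.choose_spec.comp he₂.1.choose_spec)) p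

theorem RFAfixSet_subset_displacementSubgroup (hn : 2 ≤ n) :
    RFAfixSet d n k ⊆ displacementSubgroup d n k := by
  rintro e ⟨hT, hTinv, hfix⟩
  refine ⟨hT.exists_isDisplacement hn hfix, hTinv.exists_isDisplacement hn fun x q => ?_⟩
  obtain ⟨w, hw⟩ := hfix (e.symm (x, q)).1 (e.symm (x, q)).2
  rw [Prod.mk.eta, Equiv.apply_symm_apply] at hw
  exact ⟨0 - w, shiftC_eq_shiftC_iff.1 (hw.symm.trans (shiftC_zero x).symm)⟩

end Cocycle

theorem RFAfix_embeds_in_Aut_general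
    (d n k : ℕ) :
    ∃ Φ : Equiv.Perm (Tape d n k) →
        (((Fin d → ℤ) → PermAlphabet n k) ≃ₜ ((Fin d → ℤ) → PermAlphabet n k)),
      (∀ e ∈ RFAfixSet d n k, ∀ (v : Fin d → ℤ) (x : (Fin d → ℤ) → PermAlphabet n k),
          Φ e (shiftC v x) = shiftC v (Φ e x)) ∧
      (∀ e₁ ∈ RFAfixSet d n k, ∀ e₂ ∈ RFAfixSet d n k,
          ∀ x : (Fin d → ℤ) → PermAlphabet n k, Φ (e₁ * e₂) x = Φ e₁ (Φ e₂ x)) ∧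
      (∀ e₁ ∈ RFAfixSet d n k, ∀ e₂ ∈ RFAfixSet d n k, Φ e₁ = Φ e₂ → e₁ = e₂) := by
  obtain ⟨G, c, hG⟩ : ∃ (G : Subgroup (Equiv.Perm (Tape d n k))) (_ : DisplacementCocycle G),
      ∀ e ∈ RFAfixSet d n k, e ∈ G := by
    rcases le_or_gt 2 n with hn | hn
    · exact ⟨_, displacementSubgroup.cocycle hn, RFAfixSet_subset_displacementSubgroup hn⟩
    · have : Subsingleton (Fin n) := Fin.subsingleton_iff_le_one.2 (Nat.lt_succ_iff.1 hn)
      exact ⟨⊤, .ofSubsingleton, fun _ _ => Subgroup.mem_top _⟩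
  set Φ := Function.extend Subtype.val c.toHomeomorphHom 1
  have hΦ (e : Equiv.Perm (Tape d n k)) (he : e ∈ G) : Φ e = c.toHomeomorphHom ⟨e, he⟩ :=
    Subtype.val_injective.extend_apply _ _ ⟨e, he⟩
  refine ⟨Φ, fun e he v x => ?_, fun e₁ he₁ e₂ he₂ x => ?_, fun e₁ he₁ e₂ he₂ h => ?_⟩
  · rw [hΦ e (hG e he)]
    exact c.act_shiftC e v x
  · rw [hΦ _ (G.mul_mem (hG e₁ he₁) (hG e₂ he₂)), hΦ e₁ (hG e₁ he₁), hΦ e₂ (hG e₂ he₂),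
      ← Homeomorph.mul_apply, ← map_mul]
    rfl
  · rw [hΦ e₁ (hG e₁ he₁), hΦ e₂ (hG e₂ he₂)] at h
    exact congrArg Subtype.val (c.toHomeomorphHom_injective h)

/-- There is an injective group homomorphism from
`RFA_fix(ℤ^d,n,k)` into `Aut(A^{ℤ^d})`, the group of self-homeomorphisms of the
full shift `A^{ℤ^d}` commuting with all shift maps, where `A = Σ × (ℤ/2ℤ)^Q`. -/
theorem RFAfix_embeds_in_Aut
    (d n k : ℕ) (hd : 1 ≤ d) (hn : 1 ≤ n) (hk : 1 ≤ k) :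
    ∃ Φ : Equiv.Perm (Tape d n k) →
        (((Fin d → ℤ) → PermAlphabet n k) ≃ₜ ((Fin d → ℤ) → PermAlphabet n k)),
      (∀ e ∈ RFAfixSet d n k, ∀ (v : Fin d → ℤ) (x : (Fin d → ℤ) → PermAlphabet n k),
          Φ e (shiftC v x) = shiftC v (Φ e x)) ∧
      (∀ e₁ ∈ RFAfixSet d n k, ∀ e₂ ∈ RFAfixSet d n k,
          ∀ x : (Fin d → ℤ) → PermAlphabet n k, Φ (e₁ * e₂) x = Φ e₁ (Φ e₂ x)) ∧
      (∀ e₁ ∈ RFAfixSet d n k, ∀ e₂ ∈ RFAfixSet d n k, Φ e₁ = Φ e₂ → e₁ = e₂) :=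
  RFAfix_embeds_in_Aut_general d n k
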